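/- arXiv:1607.03251 — 3 statements merged into one kernel-verified Lean document; each statement's English description precedes it below -/
import Mathlib

section
/- Fix an integer n ≥ 2 and let f : ℝ → ℝ be convex on the interval [a,b]. Then Σ_{i=1}^{n-1} f(y_{i,n-1}) + f(b_0) ≤ Σ_{j=1}^{n} f(x_{j,n}). (Here all the points y_{i,n-1}, x_{j,n} lie in (a,b) and b_0 lies in [a,b].) -/
/-!
The zeros of `p n` sum to `b 0 + ⋯ + b (n - 1)`, the trace of the truncated Jacobi matrix: this
is read off from the two top coefficients of `p n`, which the recurrence controls. Likewise the
zeros of the associated polynomial `q (n - 1)` sum to `b 1 + ⋯ + b (n - 1)`, so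
`b 0 = ∑ x - ∑ y`. Together with the interlacing `x₁ ≤ y₁ ≤ x₂ ≤ ⋯ ≤ y_{n-1} ≤ x_n`, this says
that `(y₁, …, y_{n-1}, b 0)` is majorized by `(x₁, …, x_n)`, and the inequality for convex `f`
follows by exchanging one pair of points at a time.
-/

open MeasureTheory Polynomial Finset

theorem Finset.sum_Icc_one_eq_sum_range {M : Type*} [AddCommMonoid M] (g : ℕ → M) (n : ℕ) :
    ∑ j ∈ Icc 1 n, g j = ∑ j ∈ range n, g (j + 1) := by
  rw [range_eq_Ico, sum_Ico_add']
  rfl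

theorem injOn_Icc_of_lt_add_one {α : Type*} [Preorder α] {r : ℕ → α} {a b : ℕ}
    (h : ∀ j, a ≤ j → j + 1 ≤ b → r j < r (j + 1)) : Set.InjOn r ↑(Icc a b) := by
  rw [coe_Icc]
  exact (strictMonoOn_of_lt_add_one Set.ordConnected_Icc fun j _ hj hj' ↦ h j hj.1 hj'.2).injOn

section Majorization

variable {s : Set ℝ} {f : ℝ → ℝ}

theorem ConvexOn.map_add_map_le_of_add_eq (hf : ConvexOn ℝ s f) {u v z w : ℝ} (hu : u ∈ s)
    (hv : v ∈ s) (hz : z ∈ Set.Icc u v) (hw : w ∈ Set.Icc u v) (hsum : z + w = u + v) :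
    f z + f w ≤ f u + f v := by
  obtain huv | huv := (hz.1.trans hz.2).eq_or_lt
  · obtain rfl : z = u := le_antisymm (huv ▸ hz.2) hz.1
    obtain rfl : w = z := le_antisymm (huv ▸ hw.2) hw.1
    obtain rfl : v = w := huv.symm
    rfl
  · set θ := (v - z) / (v - u)
    have hθ : θ * (v - u) = v - z := div_mul_cancel₀ _ (sub_pos.2 huv).ne'
    have h0 : 0 ≤ θ := div_nonneg (sub_nonneg.2 hz.2) (sub_pos.2 huv).le
    have h1 : 0 ≤ 1 - θ := by
      rw [sub_nonneg, div_le_one (sub_pos.2 huv)]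
      linarith [hz.1]
    have hfz := hf.2 hu hv h0 h1 (add_sub_cancel θ 1)
    have hfw := hf.2 hu hv h1 h0 (sub_add_cancel 1 θ)
    simp only [smul_eq_mul] at hfz hfw
    rw [show θ * u + (1 - θ) * v = z by linear_combination -hθ] at hfz
    rw [show (1 - θ) * u + θ * v = w by linear_combination hθ - hsum] at hfw
    linarith

theorem ConvexOn.sum_map_add_map_le_of_interlacing (hf : ConvexOn ℝ s f) {x y : ℕ → ℝ} {m : ℕ}
    (hx : ∀ j ≤ m, x j ∈ s) (hxy : ∀ i < m, x i ≤ y i ∧ y i ≤ x (i + 1)) :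
    ∑ i ∈ range m, f (y i) + f (∑ j ∈ range (m + 1), x j - ∑ i ∈ range m, y i) ≤
      ∑ j ∈ range (m + 1), f (x j) := by
  -- Step `k` trades the pair `(c k, x (k + 1))` for `(y k, c (k + 1))`: same sum, and both new
  -- points lie between the old ones, because `c k ≤ x k ≤ y k`.
  set c : ℕ → ℝ := fun k ↦ x 0 + ∑ i ∈ range k, (x (i + 1) - y i) with hc
  have hc_succ (k : ℕ) : c (k + 1) = c k + (x (k + 1) - y k) := by
    simp only [hc, sum_range_succ]; ring
  have hc_bound (k : ℕ) (hk : k ≤ m) : x 0 ≤ c k ∧ c k ≤ x k := by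
    induction k with
    | zero => simp [hc]
    | succ k ih =>
      obtain ⟨h0, hk'⟩ := ih (by omega)
      obtain ⟨hxy₁, hxy₂⟩ := hxy k (by omega)
      rw [hc_succ]
      constructor <;> linarith
  have hc_mem (k : ℕ) (hk : k ≤ m) : c k ∈ s :=
    hf.1.ordConnected.out (hx 0 (Nat.zero_le m)) (hx k hk) (hc_bound k hk)
  have hstep : ∀ k ∈ range m, f (y k) + f (c (k + 1)) ≤ f (c k) + f (x (k + 1)) := by
    intro k hk
    rw [mem_range] at hk
    obtain ⟨hxy₁, hxy₂⟩ := hxy k hk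
    have hck := (hc_bound k hk.le).2
    refine hf.map_add_map_le_of_add_eq (hc_mem k hk.le) (hx (k + 1) hk)
      ⟨by linarith, hxy₂⟩ ⟨?_, ?_⟩ ?_ <;> rw [hc_succ] <;> linarith
  have hsum := sum_le_sum hstep
  rw [sum_add_distrib, sum_add_distrib] at hsum
  have htel := sum_range_sub (fun k ↦ f (c k)) m
  have hc0 : c 0 = x 0 := by simp [hc]
  simp only [sum_sub_distrib, hc0] at htel
  have hcm : c m = ∑ j ∈ range (m + 1), x j - ∑ i ∈ range m, y i := by
    simp only [hc, sum_range_succ' x, sum_sub_distrib]; ring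
  rw [sum_range_succ' (fun j ↦ f (x j)), ← hcm]
  linarith

end Majorization

section ThreeTermRecurrence

variable {K : Type*} [Field K]

namespace Polynomial

theorem coeff_X_mul_natDegree {R : Type*} [Semiring R] (p : R[X]) :
    (X * p).coeff p.natDegree = p.nextCoeff := by
  rcases h : p.natDegree with _ | k
  · simp [nextCoeff, h]
  · rw [coeff_X_mul, nextCoeff_of_natDegree_pos (by omega), h, Nat.add_sub_cancel]

theorem nextCoeff_eq_neg_leadingCoeff_mul_sum {ι : Type*} {p : K[X]} {s : Finset ι} {r : ι → K}
    (hr : Set.InjOn r s) (hroot : ∀ i ∈ s, p.IsRoot (r i)) (hdeg : p.natDegree = #s) :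
    p.nextCoeff = -p.leadingCoeff * ∑ i ∈ s, r i := by
  rcases eq_or_ne p 0 with rfl | hp
  · simp [nextCoeff]
  have hroots : s.val.map r = p.roots := by
    refine Multiset.eq_of_le_of_card_le ?_ (by simpa [hdeg] using card_roots' p)
    rw [Multiset.le_iff_subset (s.nodup_map_iff_injOn.2 hr)]
    intro z hz
    obtain ⟨i, hi, rfl⟩ := Multiset.mem_map.1 hz
    exact (mem_roots hp).2 (hroot i hi)
  have hsplit : p.Splits := splits_iff_card_roots.2 (by rw [← hroots]; simp [hdeg])
  rw [hsplit.nextCoeff_eq_neg_sum_roots_mul_leadingCoeff, ← hroots, sum_eq_multiset_sum]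

theorem degree_eq_of_X_mul_eq {p q r : K[X]} {a b c : K} {k : ℕ} (ha : a ≠ 0)
    (hq : q.degree = k) (hr : r.degree < k) (h : X * q = C a * p + C b * q + C c * r) :
    p.degree = (k + 1 : ℕ) := by
  have hp : C a * p = q * X - (C b * q + C c * r) := by rw [mul_comm q, h]; ring
  have hlow : (C b * q + C c * r).degree < (q * X).degree := by
    have hC (d : K) (t : K[X]) : (C d * t).degree ≤ t.degree := by
      rw [← smul_eq_C_mul]; exact degree_smul_le d t
    rw [degree_mul_X, hq]
    refine (degree_add_le _ _).trans_lt (max_lt ?_ ?_)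
    · exact (hC _ _).trans_lt (by rw [hq]; exact_mod_cast k.lt_succ_self)
    · exact (hC _ _).trans_lt (hr.trans (by exact_mod_cast k.lt_succ_self))
  rw [← degree_C_mul ha, hp, degree_sub_eq_left_of_degree_lt hlow, degree_mul_X, hq]
  rfl

theorem leadingCoeff_eq_and_nextCoeff_eq_of_X_mul_eq {p q r : K[X]} {a b c : K}
    (hp : p.natDegree = q.natDegree + 1) (hr : r.degree < q.natDegree)
    (h : X * q = C a * p + C b * q + C c * r) :
    q.leadingCoeff = a * p.leadingCoeff ∧
      q.nextCoeff = a * p.nextCoeff + b * q.leadingCoeff := by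
  have hr' : r.degree < (q.natDegree + 1 : ℕ) :=
    hr.trans (by exact_mod_cast q.natDegree.lt_succ_self)
  have htop := congrArg (coeff · (q.natDegree + 1)) h
  have hnext := congrArg (coeff · q.natDegree) h
  simp only [coeff_add, coeff_C_mul, coeff_X_mul, coeff_X_mul_natDegree] at htop hnext
  rw [coeff_eq_zero_of_natDegree_lt q.natDegree.lt_succ_self, coeff_eq_zero_of_degree_lt hr',
    ← hp, mul_zero, mul_zero, add_zero, add_zero] at htop
  rw [coeff_eq_zero_of_degree_lt hr, mul_zero, add_zero] at hnext
  rw [nextCoeff_of_natDegree_pos (p := p) (by omega), hp, Nat.add_sub_cancel]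
  exact ⟨htop, hnext⟩

end Polynomial

def IsThreeTermRecurrence (A B : ℕ → K) (P : ℕ → K[X]) : Prop :=
  X * P 0 = C (A 1) * P 1 + C (B 0) * P 0 ∧
    ∀ m, X * P (m + 1) =
      C (A (m + 2)) * P (m + 2) + C (B (m + 1)) * P (m + 1) + C (A (m + 1)) * P m

namespace IsThreeTermRecurrence

variable {A B : ℕ → K} {P : ℕ → K[X]}

theorem degree_eq (h : IsThreeTermRecurrence A B P) (hA : ∀ m, A (m + 1) ≠ 0)
    (h0 : (P 0).degree = 0) (m : ℕ) : (P m).degree = m := by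
  suffices ∀ m, (P m).degree = m ∧ (P (m + 1)).degree = (m + 1 : ℕ) from (this m).1
  intro m
  induction m with
  | zero =>
    refine ⟨h0, degree_eq_of_X_mul_eq (hA 0) h0 (r := 0) (b := B 0) (c := 0) (by simp) ?_⟩
    rw [mul_zero, add_zero]
    exact h.1
  | succ m ih =>
    refine ⟨ih.2, degree_eq_of_X_mul_eq (hA (m + 1)) ih.2 ?_ (h.2 m)⟩
    rw [ih.1]
    exact_mod_cast m.lt_succ_self

theorem nextCoeff_eq (h : IsThreeTermRecurrence A B P) (hA : ∀ m, A (m + 1) ≠ 0)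
    (hdeg : ∀ m, (P m).degree = m) (m : ℕ) :
    (P m).nextCoeff = -(∑ k ∈ range m, B k) * (P m).leadingCoeff := by
  have hnat (m : ℕ) : (P m).natDegree = m := natDegree_eq_of_degree_eq_some (hdeg m)
  induction m with
  | zero => simp [nextCoeff, hnat 0]
  | succ m ih =>
    obtain ⟨hlead, hnext⟩ : (P m).leadingCoeff = A (m + 1) * (P (m + 1)).leadingCoeff ∧
        (P m).nextCoeff = A (m + 1) * (P (m + 1)).nextCoeff + B m * (P m).leadingCoeff := by
      rcases m with _ | m
      · refine leadingCoeff_eq_and_nextCoeff_eq_of_X_mul_eq (r := 0) (c := 0)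
          (by simp [hnat]) (by simp) ?_
        rw [mul_zero, add_zero]
        exact h.1
      · refine leadingCoeff_eq_and_nextCoeff_eq_of_X_mul_eq (by simp [hnat]) ?_ (h.2 m)
        rw [hdeg, hnat]
        exact_mod_cast m.lt_succ_self
    apply mul_left_cancel₀ (hA m)
    rw [sum_range_succ]
    linear_combination -hnext + ih - (∑ k ∈ range m, B k + B m) * hlead

theorem sum_roots_eq (h : IsThreeTermRecurrence A B P) (hA : ∀ m, A (m + 1) ≠ 0)
    (hdeg : ∀ m, (P m).degree = m) {m : ℕ} {ι : Type*} {s : Finset ι} {r : ι → K}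
    (hr : Set.InjOn r s) (hroot : ∀ i ∈ s, (P m).IsRoot (r i)) (hcard : #s = m) :
    ∑ i ∈ s, r i = ∑ k ∈ range m, B k := by
  have hlead : (P m).leadingCoeff ≠ 0 :=
    leadingCoeff_ne_zero.2 fun h0 ↦ by simpa [h0] using hdeg m
  have hvieta := nextCoeff_eq_neg_leadingCoeff_mul_sum hr hroot
    ((natDegree_eq_of_degree_eq_some (hdeg m)).trans hcard.symm)
  rw [h.nextCoeff_eq hA hdeg, neg_mul, neg_mul, neg_inj, mul_comm] at hvieta
  exact (mul_left_cancel₀ hlead hvieta).symm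

end IsThreeTermRecurrence

end ThreeTermRecurrence

theorem stmt_9_general
    (lo hi : ℝ)
    (p : ℕ → Polynomial ℝ)
    (hdeg : ∀ m : ℕ, (p m).degree = m)
    (a b : ℕ → ℝ)
    (hapos : ∀ m : ℕ, 1 ≤ m → 0 < a m)
    (hrec0 : Polynomial.X * p 0 = Polynomial.C (a 1) * p 1 + Polynomial.C (b 0) * p 0)
    (hrec : ∀ m : ℕ, Polynomial.X * p (m + 1) =
      Polynomial.C (a (m + 2)) * p (m + 2) + Polynomial.C (b (m + 1)) * p (m + 1) +
        Polynomial.C (a (m + 1)) * p m)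
    (x : ℕ → ℕ → ℝ)
    (hxroot : ∀ m j : ℕ, 1 ≤ j → j ≤ m → (p m).eval (x m j) = 0)
    (hxmono : ∀ m j : ℕ, 1 ≤ j → j + 1 ≤ m → x m j < x m (j + 1))
    (q : ℕ → Polynomial ℝ)
    (hq0 : q 0 = 1)
    (hqrec0 : Polynomial.X * q 0 = Polynomial.C (a 2) * q 1 + Polynomial.C (b 1) * q 0)
    (hqrec : ∀ m : ℕ, Polynomial.X * q (m + 1) =
      Polynomial.C (a (m + 3)) * q (m + 2) + Polynomial.C (b (m + 2)) * q (m + 1) +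
        Polynomial.C (a (m + 2)) * q m)
    (y : ℕ → ℕ → ℝ)
    (hyroot : ∀ m j : ℕ, 1 ≤ j → j ≤ m → (q m).eval (y m j) = 0)
    (hymono : ∀ m j : ℕ, 1 ≤ j → j + 1 ≤ m → y m j < y m (j + 1))
    (hxy : ∀ m j : ℕ, 1 ≤ j → j ≤ m → x (m + 1) j < y m j ∧ y m j < x (m + 1) (j + 1))
    (n : ℕ) (hn : 2 ≤ n)
    (f : ℝ → ℝ) (hf : ConvexOn ℝ (Set.Icc lo hi) f)
    (hx_in : ∀ j : ℕ, 1 ≤ j → j ≤ n → x n j ∈ Set.Ioo lo hi) :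
    (∑ i ∈ Finset.Icc 1 (n - 1), f (y (n - 1) i)) + f (b 0) ≤
      ∑ j ∈ Finset.Icc 1 n, f (x n j) := by
  obtain ⟨m, rfl⟩ : ∃ m, n = m + 1 := ⟨n - 1, by omega⟩
  rw [Nat.add_sub_cancel]
  have hA (k : ℕ) : a (k + 1) ≠ 0 := (hapos (k + 1) k.succ_pos).ne'
  have hp : IsThreeTermRecurrence a b p := ⟨hrec0, hrec⟩
  have hq : IsThreeTermRecurrence (fun k ↦ a (k + 1)) (fun k ↦ b (k + 1)) q := ⟨hqrec0, hqrec⟩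
  have hx_sum : ∑ j ∈ Icc 1 (m + 1), x (m + 1) j = ∑ k ∈ range (m + 1), b k :=
    hp.sum_roots_eq hA hdeg (injOn_Icc_of_lt_add_one (hxmono _))
      (fun j hj ↦ hxroot _ j (mem_Icc.1 hj).1 (mem_Icc.1 hj).2) (Nat.card_Icc 1 (m + 1))
  have hy_sum : ∑ i ∈ Icc 1 m, y m i = ∑ k ∈ range m, b (k + 1) :=
    hq.sum_roots_eq (fun k ↦ hA (k + 1)) (hq.degree_eq (fun k ↦ hA (k + 1)) (by simp [hq0]))
      (injOn_Icc_of_lt_add_one (hymono _))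
      (fun j hj ↦ hyroot _ j (mem_Icc.1 hj).1 (mem_Icc.1 hj).2) (Nat.card_Icc 1 m)
  have hb0 : b 0 = ∑ j ∈ Icc 1 (m + 1), x (m + 1) j - ∑ i ∈ Icc 1 m, y m i := by
    rw [hx_sum, hy_sum, sum_range_succ']
    ring
  rw [hb0]
  simp only [sum_Icc_one_eq_sum_range]
  refine hf.sum_map_add_map_le_of_interlacing (fun j hj ↦ ?_) (fun i hi ↦ ?_)
  · exact Set.Ioo_subset_Icc_self (hx_in (j + 1) (by omega) (by omega))
  · obtain ⟨hlt, hgt⟩ := hxy m (i + 1) (by omega) (by omega)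
    exact ⟨hlt.le, hgt.le⟩

theorem stmt_9
    (μ : Measure ℝ) [IsProbabilityMeasure μ]
    (lo hi : ℝ)
    (hsupp : μ (Set.Icc lo hi)ᶜ = 0)
    (hinf : ∀ s : Finset ℝ, μ (↑s : Set ℝ)ᶜ ≠ 0)
    (p : ℕ → Polynomial ℝ)
    (hdeg : ∀ m : ℕ, (p m).degree = m)
    (hlead : ∀ m : ℕ, 0 < (p m).leadingCoeff)
    (horth : ∀ m l : ℕ, ∫ t, (p m).eval t * (p l).eval t ∂μ = if m = l then 1 else 0)
    (a b : ℕ → ℝ)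
    (hapos : ∀ m : ℕ, 1 ≤ m → 0 < a m)
    (hrec0 : Polynomial.X * p 0 = Polynomial.C (a 1) * p 1 + Polynomial.C (b 0) * p 0)
    (hrec : ∀ m : ℕ, Polynomial.X * p (m + 1) =
      Polynomial.C (a (m + 2)) * p (m + 2) + Polynomial.C (b (m + 1)) * p (m + 1) +
        Polynomial.C (a (m + 1)) * p m)
    (x : ℕ → ℕ → ℝ)
    (hxroot : ∀ m j : ℕ, 1 ≤ j → j ≤ m → (p m).eval (x m j) = 0)
    (hxmono : ∀ m j : ℕ, 1 ≤ j → j + 1 ≤ m → x m j < x m (j + 1))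
    (q : ℕ → Polynomial ℝ)
    (hq0 : q 0 = 1)
    (hqrec0 : Polynomial.X * q 0 = Polynomial.C (a 2) * q 1 + Polynomial.C (b 1) * q 0)
    (hqrec : ∀ m : ℕ, Polynomial.X * q (m + 1) =
      Polynomial.C (a (m + 3)) * q (m + 2) + Polynomial.C (b (m + 2)) * q (m + 1) +
        Polynomial.C (a (m + 2)) * q m)
    (y : ℕ → ℕ → ℝ)
    (hyroot : ∀ m j : ℕ, 1 ≤ j → j ≤ m → (q m).eval (y m j) = 0)
    (hymono : ∀ m j : ℕ, 1 ≤ j → j + 1 ≤ m → y m j < y m (j + 1))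
    (hxy : ∀ m j : ℕ, 1 ≤ j → j ≤ m → x (m + 1) j < y m j ∧ y m j < x (m + 1) (j + 1))
    (n : ℕ) (hn : 2 ≤ n)
    (f : ℝ → ℝ) (hf : ConvexOn ℝ (Set.Icc lo hi) f)
    (hx_in : ∀ j : ℕ, 1 ≤ j → j ≤ n → x n j ∈ Set.Ioo lo hi)
    (hy_in : ∀ i : ℕ, 1 ≤ i → i ≤ n - 1 → y (n - 1) i ∈ Set.Ioo lo hi)
    (hb_in : b 0 ∈ Set.Icc lo hi) :
    (∑ i ∈ Finset.Icc 1 (n - 1), f (y (n - 1) i)) + f (b 0) ≤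
      ∑ j ∈ Finset.Icc 1 n, f (x n j) :=
  stmt_9_general lo hi p hdeg a b hapos hrec0 hrec x hxroot hxmono q hq0 hqrec0 hqrec y hyroot
    hymono hxy n hn f hf hx_in
end

section
/- Fix an integer n ≥ 2. The vector v = (y_{1,n-1}, …, y_{n-1,n-1}, b_0) ∈ ℝⁿ is majorized by the vector w = (x_{1,n}, …, x_{n,n}) ∈ ℝⁿ: if v̂ and ŵ denote the components of v and w arranged in decreasing order, then Σ_{i=1}^{m} v̂_i ≤ Σ_{i=1}^{m} ŵ_i for every 1 ≤ m ≤ n−1, and Σ_{i=1}^{n} v̂_i = Σ_{i=1}^{n} ŵ_i. -/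
/-!
Comparing the coefficients of `X ^ (m + 1)` and `X ^ m` in the recurrence shows that the sum of the
zeros of `p n` is `b 0 + ⋯ + b (n - 1)` and that of `q (n - 1)` is `b 1 + ⋯ + b (n - 1)`, so `v`
and `w` have the same total. Let `S` be any set of `m` indices. If `S` avoids the entry `b 0`, each
`y j` it contains is below `x (j + 1)`; otherwise its complement consists of entries `y j ≥ x j`,
and the equal totals turn this around. Either way `∑ i ∈ S, v i` is at most a sum of `m` entries
of `w`, hence at most the sum of the `m` largest ones.
-/

open MeasureTheory Polynomial Finset

section Rearrangement

variable {M : Type*} [AddCommMonoid M]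

theorem Finset.sum_le_sum_of_card_eq [LinearOrder M] [IsOrderedAddMonoid M] {ι : Type*}
    [DecidableEq ι] {f : ι → M} {S T : Finset ι} (hcard : #S = #T)
    (h : ∀ i ∈ S \ T, ∀ j ∈ T \ S, f i ≤ f j) : ∑ i ∈ S, f i ≤ ∑ j ∈ T, f j := by
  rw [← sum_inter_add_sum_sdiff S T, ← sum_inter_add_sum_sdiff T S, inter_comm T S]
  gcongr (∑ i ∈ S ∩ T, f i) + ?_
  rcases (S \ T).eq_empty_or_nonempty with hST | hST
  · have hTS : T \ S = ∅ := card_eq_zero.mp (by rw [← card_sdiff_comm hcard, hST, card_empty])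
    simp [hST, hTS]
  · calc ∑ i ∈ S \ T, f i ≤ #(S \ T) • (S \ T).sup' hST f :=
          sum_le_card_nsmul _ _ _ fun i hi => le_sup' f hi
      _ = #(T \ S) • (S \ T).sup' hST f := by rw [card_sdiff_comm hcard]
      _ ≤ ∑ j ∈ T \ S, f j :=
          card_nsmul_le_sum _ _ _ fun j hj => sup'_le _ _ fun i hi => h i hi j hj

theorem Antitone.sum_le_sum_filter_lt [LinearOrder M] [IsOrderedAddMonoid M] {n : ℕ}
    {g : Fin n → M} (hg : Antitone g) (S : Finset (Fin n)) :
    ∑ i ∈ S, g i ≤ ∑ i ∈ univ.filter (fun i : Fin n => (i : ℕ) < #S), g i := by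
  refine sum_le_sum_of_card_eq ?_ fun i hi j hj => hg ?_
  · rw [Fin.card_filter_val_lt, min_eq_right (card_le_univ S |>.trans_eq (Fintype.card_fin n))]
  · simp only [mem_sdiff, mem_filter, mem_univ, true_and] at hi hj
    exact Fin.le_def.mpr (by omega)

theorem sum_le_sum_filter_lt_of_antitone_comp [LinearOrder M] [IsOrderedAddMonoid M] {n : ℕ}
    {g : Fin n → M} {τ : Equiv.Perm (Fin n)} (hτ : Antitone fun i => g (τ i))
    (S : Finset (Fin n)) :
    ∑ i ∈ S, g i ≤ ∑ i ∈ univ.filter (fun i : Fin n => (i : ℕ) < #S), g (τ i) := by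
  simpa [sum_map] using hτ.sum_le_sum_filter_lt (S.map τ.symm.toEmbedding)

theorem exists_card_eq_sum_le_of_interlace [PartialOrder M] [IsOrderedCancelAddMonoid M] {n : ℕ}
    {v w : Fin (n + 1) → M} (hlow : ∀ i : Fin n, w i.castSucc ≤ v i.castSucc)
    (hup : ∀ i : Fin n, v i.castSucc ≤ w i.succ) (hsum : ∑ i, v i = ∑ i, w i)
    (S : Finset (Fin (n + 1))) :
    ∃ T : Finset (Fin (n + 1)), #T = #S ∧ ∑ i ∈ S, v i ≤ ∑ i ∈ T, w i := by
  by_cases hlast : Fin.last n ∈ S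
  · refine ⟨S, rfl, le_of_add_le_add_right (a := ∑ i ∈ Sᶜ, w i) ?_⟩
    calc ∑ i ∈ S, v i + ∑ i ∈ Sᶜ, w i ≤ ∑ i ∈ S, v i + ∑ i ∈ Sᶜ, v i := by
          gcongr with i hi
          obtain ⟨j, rfl⟩ :=
            Fin.exists_castSucc_eq.mpr (ne_of_mem_of_not_mem hlast (mem_compl.mp hi)).symm
          exact hlow j
      _ = ∑ i ∈ S, w i + ∑ i ∈ Sᶜ, w i := by rw [sum_add_sum_compl, sum_add_sum_compl, hsum]
  · refine ⟨S.map (Equiv.addRight 1).toEmbedding, card_map _, ?_⟩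
    rw [sum_map]
    refine sum_le_sum fun i hi => ?_
    obtain ⟨j, rfl⟩ := Fin.exists_castSucc_eq.mpr (ne_of_mem_of_not_mem hi hlast)
    simpa [Fin.coeSucc_eq_succ] using hup j

theorem sum_filter_lt_le_of_interlace [LinearOrder M] [IsOrderedCancelAddMonoid M] {n : ℕ}
    {v w : Fin (n + 1) → M} (hlow : ∀ i : Fin n, w i.castSucc ≤ v i.castSucc)
    (hup : ∀ i : Fin n, v i.castSucc ≤ w i.succ) (hsum : ∑ i, v i = ∑ i, w i)
    (σ : Equiv.Perm (Fin (n + 1))) {τ : Equiv.Perm (Fin (n + 1))}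
    (hτ : Antitone fun i => w (τ i)) {m : ℕ} (hm : m ≤ n + 1) :
    ∑ i ∈ univ.filter (fun i : Fin (n + 1) => (i : ℕ) < m), v (σ i) ≤
      ∑ i ∈ univ.filter (fun i : Fin (n + 1) => (i : ℕ) < m), w (τ i) := by
  set S := (univ.filter fun i : Fin (n + 1) => (i : ℕ) < m).map σ.toEmbedding
  obtain ⟨T, hTS, hST⟩ := exists_card_eq_sum_le_of_interlace hlow hup hsum S
  have hT : #T = m := by
    rw [hTS, card_map, Fin.card_filter_val_lt, min_eq_right hm]
  calc _ = ∑ i ∈ S, v i := (sum_map _ _ _).symm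
    _ ≤ ∑ i ∈ T, w i := hST
    _ ≤ _ := hT ▸ sum_le_sum_filter_lt_of_antitone_comp hτ T

end Rearrangement

theorem strictMono_fin_of_lt_add_one {α : Type*} [Preorder α] {N : ℕ} {z : ℕ → α}
    (h : ∀ j, 1 ≤ j → j + 1 ≤ N → z j < z (j + 1)) : StrictMono fun i : Fin N => z (i + 1) := by
  have hz : StrictMonoOn z (Set.Icc 1 N) :=
    strictMonoOn_of_lt_add_one Set.ordConnected_Icc fun j _ hj hj1 => h j hj.1 hj1.2
  intro i j hij
  exact hz ⟨by omega, i.isLt⟩ ⟨by omega, j.isLt⟩ (by simpa using hij)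

namespace Polynomial

variable {R : Type*} [CommRing R]

theorem coeff_X_mul_eq_nextCoeff {p : R[X]} {m : ℕ} (hp : p.degree = m) :
    (X * p).coeff m = p.nextCoeff := by
  have hnat := natDegree_eq_of_degree_eq_some hp
  cases m with
  | zero => simp [nextCoeff, hnat]
  | succ m => rw [coeff_X_mul, nextCoeff_of_natDegree_pos (by omega), hnat, Nat.add_sub_cancel]

theorem leadingCoeff_nextCoeff_of_X_mul_eq {P Q S : R[X]} {α β : R} {m : ℕ}
    (hP : P.degree = m) (hQ : Q.degree = ↑(m + 1)) (hS : S.degree < m)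
    (h : X * P = C α * Q + C β * P + S) :
    P.leadingCoeff = α * Q.leadingCoeff ∧
      P.nextCoeff = α * Q.nextCoeff + β * P.leadingCoeff := by
  have hPn := natDegree_eq_of_degree_eq_some hP
  have hQn := natDegree_eq_of_degree_eq_some hQ
  have hlt : (m : WithBot ℕ) < ↑(m + 1) := by exact_mod_cast m.lt_succ_self
  have hP1 : P.coeff (m + 1) = 0 := coeff_eq_zero_of_degree_lt (hP ▸ hlt)
  have hS1 : S.coeff (m + 1) = 0 := coeff_eq_zero_of_degree_lt (hS.trans hlt)
  have htop := congrArg (coeff · (m + 1)) h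
  have hnext := congrArg (coeff · m) h
  simp only [coeff_add, coeff_C_mul, coeff_X_mul, hP1, hS1] at htop hnext
  rw [coeff_X_mul_eq_nextCoeff hP, coeff_eq_zero_of_degree_lt hS] at hnext
  rw [leadingCoeff, leadingCoeff, hPn, hQn, nextCoeff_of_natDegree_pos (p := Q) (by omega), hQn,
    Nat.add_sub_cancel]
  exact ⟨by linear_combination htop, by linear_combination hnext⟩

theorem degree_C_mul_le (a : R) (p : R[X]) : (C a * p).degree ≤ p.degree := by
  rw [← smul_eq_C_mul]
  exact degree_smul_le a p

variable [IsDomain R]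

theorem degree_eq_succ_of_X_mul_eq {P Q S : R[X]} {α β : R} {m : ℕ} (hα : α ≠ 0)
    (hP : P.degree = m) (hS : S.degree < m) (h : X * P = C α * Q + C β * P + S) :
    Q.degree = ↑(m + 1) := by
  have hlt : (m : WithBot ℕ) < ↑(m + 1) := by exact_mod_cast m.lt_succ_self
  have hXP : (X * P).degree = ↑(m + 1) := by rw [X_mul, degree_mul_X, hP]; rfl
  have hβP : (C β * P).degree < ↑(m + 1) := (degree_C_mul_le β P).trans_lt (hP ▸ hlt)
  have hQ : C α * Q = X * P - C β * P - S := by rw [h]; ring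
  have hXPβP : (X * P - C β * P).degree = ↑(m + 1) := by
    rw [degree_sub_eq_left_of_degree_lt (hXP ▸ hβP), hXP]
  rw [← degree_C_mul hα, hQ, degree_sub_eq_left_of_degree_lt (hXPβP ▸ hS.trans hlt), hXPβP]

theorem nextCoeff_eq_neg_leadingCoeff_mul_sum_of_roots {p : R[X]} {S : Finset R}
    (hS : ∀ x ∈ S, p.eval x = 0) (hcard : #S = p.degree) :
    p.nextCoeff = -p.leadingCoeff * ∑ x ∈ S, x := by
  have hroots : p.roots = S.val := roots_eq_of_degree_eq_card hS hcard
  have hsplit : p.Splits := by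
    rw [splits_iff_card_roots, hroots, card_val, natDegree_eq_of_degree_eq_some hcard.symm]
  rw [hsplit.nextCoeff_eq_neg_sum_roots_mul_leadingCoeff, hroots, Finset.sum_eq_multiset_sum,
    Multiset.map_id']

section ThreeTermRecurrence

variable {P : ℕ → R[X]} {A A' B : ℕ → R}

theorem degree_eq_of_threeTermRecurrence (hA : ∀ m, A m ≠ 0) (hP0 : (P 0).degree = 0)
    (h0 : X * P 0 = C (A 0) * P 1 + C (B 0) * P 0)
    (hrec : ∀ m, X * P (m + 1) =
      C (A (m + 1)) * P (m + 2) + C (B (m + 1)) * P (m + 1) + C (A' m) * P m)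
    (m : ℕ) : (P m).degree = m := by
  suffices ∀ m, (P m).degree = m ∧ (P (m + 1)).degree = ↑(m + 1) from (this m).1
  intro m
  induction m with
  | zero =>
    exact ⟨hP0, degree_eq_succ_of_X_mul_eq (S := 0) (hA 0) hP0 (by simp) (by simpa using h0)⟩
  | succ m ih =>
    refine ⟨ih.2, degree_eq_succ_of_X_mul_eq (hA (m + 1)) ih.2 ?_ (hrec m)⟩
    exact (degree_C_mul_le _ _).trans_lt (by rw [ih.1]; exact_mod_cast m.lt_succ_self)

theorem nextCoeff_eq_of_threeTermRecurrence (hA : ∀ m, A m ≠ 0) (hdeg : ∀ m, (P m).degree = m)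
    (h0 : X * P 0 = C (A 0) * P 1 + C (B 0) * P 0)
    (hrec : ∀ m, X * P (m + 1) =
      C (A (m + 1)) * P (m + 2) + C (B (m + 1)) * P (m + 1) + C (A' m) * P m)
    (m : ℕ) : (P m).nextCoeff = -(P m).leadingCoeff * ∑ k ∈ range m, B k := by
  induction m with
  | zero => simp [nextCoeff, natDegree_eq_of_degree_eq_some (hdeg 0)]
  | succ m ih =>
    obtain ⟨hlead, hnext⟩ : (P m).leadingCoeff = A m * (P (m + 1)).leadingCoeff ∧
        (P m).nextCoeff = A m * (P (m + 1)).nextCoeff + B m * (P m).leadingCoeff := by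
      cases m with
      | zero =>
        exact leadingCoeff_nextCoeff_of_X_mul_eq (S := 0) (hdeg 0) (hdeg 1) (by simp)
          (by simpa using h0)
      | succ m =>
        refine leadingCoeff_nextCoeff_of_X_mul_eq (hdeg _) (hdeg _) ?_ (hrec m)
        exact (degree_C_mul_le _ _).trans_lt (by rw [hdeg]; exact_mod_cast m.lt_succ_self)
    apply mul_left_cancel₀ (hA m)
    rw [sum_range_succ]
    linear_combination ih - hnext - (∑ k ∈ range m, B k + B m) * hlead

theorem sum_roots_eq_of_threeTermRecurrence (hA : ∀ m, A m ≠ 0) (hdeg : ∀ m, (P m).degree = m)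
    (h0 : X * P 0 = C (A 0) * P 1 + C (B 0) * P 0)
    (hrec : ∀ m, X * P (m + 1) =
      C (A (m + 1)) * P (m + 2) + C (B (m + 1)) * P (m + 1) + C (A' m) * P m)
    {m : ℕ} {z : Fin m → R} (hz : Function.Injective z) (hroot : ∀ i, (P m).eval (z i) = 0) :
    ∑ i, z i = ∑ k ∈ range m, B k := by
  classical
  have hcard : #(univ.image z) = (P m).degree := by
    rw [card_image_of_injective _ hz, card_univ, Fintype.card_fin, hdeg]
  have hvieta := nextCoeff_eq_neg_leadingCoeff_mul_sum_of_roots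
    (by simpa using hroot) hcard
  rw [nextCoeff_eq_of_threeTermRecurrence hA hdeg h0 hrec, sum_image hz.injOn] at hvieta
  have hP : P m ≠ 0 := by rintro h; simpa [h] using hdeg m
  exact (mul_left_cancel₀ (neg_ne_zero.mpr (leadingCoeff_ne_zero.mpr hP)) hvieta).symm

end ThreeTermRecurrence

end Polynomial

theorem stmt_11_general
    (p : ℕ → Polynomial ℝ)
    (hdeg : ∀ m : ℕ, (p m).degree = m)
    (a b : ℕ → ℝ)
    (hapos : ∀ m : ℕ, 1 ≤ m → 0 < a m)
    (hrec0 : Polynomial.X * p 0 = Polynomial.C (a 1) * p 1 + Polynomial.C (b 0) * p 0)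
    (hrec : ∀ m : ℕ, Polynomial.X * p (m + 1) =
      Polynomial.C (a (m + 2)) * p (m + 2) + Polynomial.C (b (m + 1)) * p (m + 1) +
        Polynomial.C (a (m + 1)) * p m)
    (x : ℕ → ℕ → ℝ)
    (hxroot : ∀ m j : ℕ, 1 ≤ j → j ≤ m → (p m).eval (x m j) = 0)
    (hxmono : ∀ m j : ℕ, 1 ≤ j → j + 1 ≤ m → x m j < x m (j + 1))
    (q : ℕ → Polynomial ℝ)
    (hq0 : q 0 = 1)
    (hqrec0 : Polynomial.X * q 0 = Polynomial.C (a 2) * q 1 + Polynomial.C (b 1) * q 0)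
    (hqrec : ∀ m : ℕ, Polynomial.X * q (m + 1) =
      Polynomial.C (a (m + 3)) * q (m + 2) + Polynomial.C (b (m + 2)) * q (m + 1) +
        Polynomial.C (a (m + 2)) * q m)
    (y : ℕ → ℕ → ℝ)
    (hyroot : ∀ m j : ℕ, 1 ≤ j → j ≤ m → (q m).eval (y m j) = 0)
    (hymono : ∀ m j : ℕ, 1 ≤ j → j + 1 ≤ m → y m j < y m (j + 1))
    (hxy : ∀ m j : ℕ, 1 ≤ j → j ≤ m → x (m + 1) j < y m j ∧ y m j < x (m + 1) (j + 1))
    (n : ℕ)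
    (v w : Fin n → ℝ)
    (hv : ∀ i : Fin n, (i : ℕ) + 1 ≤ n - 1 → v i = y (n - 1) ((i : ℕ) + 1))
    (hv' : ∀ i : Fin n, (i : ℕ) + 1 = n → v i = b 0)
    (hw : ∀ i : Fin n, w i = x n ((i : ℕ) + 1))
    (σ τ : Equiv.Perm (Fin n))
    (hτ : Antitone (fun i => w (τ i))) :
    (∀ m : ℕ, 1 ≤ m → m ≤ n - 1 →
      ∑ i ∈ Finset.univ.filter (fun i : Fin n => (i : ℕ) < m), v (σ i) ≤
        ∑ i ∈ Finset.univ.filter (fun i : Fin n => (i : ℕ) < m), w (τ i)) ∧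
    ∑ i : Fin n, v i = ∑ i : Fin n, w i := by
  rcases n with _ | n
  · exact ⟨fun m _ hm => absurd hm (by omega), rfl⟩
  have hpA : ∀ m, a (m + 1) ≠ 0 := fun m => (hapos _ (by omega)).ne'
  have hqA : ∀ m, a (m + 2) ≠ 0 := fun m => (hapos _ (by omega)).ne'
  have hqdeg : ∀ m, (q m).degree = m :=
    degree_eq_of_threeTermRecurrence (A := fun m => a (m + 2)) (A' := fun m => a (m + 2))
      (B := fun m => b (m + 1)) hqA (by simp [hq0]) hqrec0 hqrec
  have hvy : ∀ i : Fin n, v i.castSucc = y n (i + 1) := fun i => hv _ (by simp)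
  have hsum_w : ∑ i, w i = ∑ k ∈ range (n + 1), b k := by
    refine sum_roots_eq_of_threeTermRecurrence (A := fun m => a (m + 1))
      (A' := fun m => a (m + 1)) hpA hdeg hrec0 hrec ?_ fun i => ?_
    · simpa only [funext hw] using (strictMono_fin_of_lt_add_one (hxmono (n + 1))).injective
    · rw [hw]; exact hxroot _ _ (by omega) i.isLt
  have hsum_y : ∑ i : Fin n, y n (i + 1) = ∑ k ∈ range n, b (k + 1) := by
    refine sum_roots_eq_of_threeTermRecurrence (A := fun m => a (m + 2))
      (A' := fun m => a (m + 2)) (B := fun m => b (m + 1)) hqA hqdeg hqrec0 hqrec ?_ fun i => ?_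
    · exact (strictMono_fin_of_lt_add_one (hymono n)).injective
    · exact hyroot _ _ (by omega) i.isLt
  have htotal : ∑ i, v i = ∑ i, w i := by
    rw [Fin.sum_univ_castSucc, hsum_w, sum_range_succ', ← hsum_y, hv' _ (by simp)]
    simp only [hvy]
  have hlow : ∀ i : Fin n, w i.castSucc ≤ v i.castSucc := fun i => by
    simpa [hw, hvy] using (hxy n (i + 1) (by omega) i.isLt).1.le
  have hup : ∀ i : Fin n, v i.castSucc ≤ w i.succ := fun i => by
    simpa [hw, hvy] using (hxy n (i + 1) (by omega) i.isLt).2.le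
  exact ⟨fun m _ hm => sum_filter_lt_le_of_interlace hlow hup htotal σ hτ (by omega), htotal⟩

theorem stmt_11
    (μ : Measure ℝ) [IsProbabilityMeasure μ]
    (lo hi : ℝ)
    (hsupp : μ (Set.Icc lo hi)ᶜ = 0)
    (hinf : ∀ s : Finset ℝ, μ (↑s : Set ℝ)ᶜ ≠ 0)
    (p : ℕ → Polynomial ℝ)
    (hdeg : ∀ m : ℕ, (p m).degree = m)
    (hlead : ∀ m : ℕ, 0 < (p m).leadingCoeff)
    (horth : ∀ m l : ℕ, ∫ t, (p m).eval t * (p l).eval t ∂μ = if m = l then 1 else 0)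
    (a b : ℕ → ℝ)
    (hapos : ∀ m : ℕ, 1 ≤ m → 0 < a m)
    (hrec0 : Polynomial.X * p 0 = Polynomial.C (a 1) * p 1 + Polynomial.C (b 0) * p 0)
    (hrec : ∀ m : ℕ, Polynomial.X * p (m + 1) =
      Polynomial.C (a (m + 2)) * p (m + 2) + Polynomial.C (b (m + 1)) * p (m + 1) +
        Polynomial.C (a (m + 1)) * p m)
    (x : ℕ → ℕ → ℝ)
    (hxroot : ∀ m j : ℕ, 1 ≤ j → j ≤ m → (p m).eval (x m j) = 0)
    (hxmono : ∀ m j : ℕ, 1 ≤ j → j + 1 ≤ m → x m j < x m (j + 1))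
    (q : ℕ → Polynomial ℝ)
    (hq0 : q 0 = 1)
    (hqrec0 : Polynomial.X * q 0 = Polynomial.C (a 2) * q 1 + Polynomial.C (b 1) * q 0)
    (hqrec : ∀ m : ℕ, Polynomial.X * q (m + 1) =
      Polynomial.C (a (m + 3)) * q (m + 2) + Polynomial.C (b (m + 2)) * q (m + 1) +
        Polynomial.C (a (m + 2)) * q m)
    (y : ℕ → ℕ → ℝ)
    (hyroot : ∀ m j : ℕ, 1 ≤ j → j ≤ m → (q m).eval (y m j) = 0)
    (hymono : ∀ m j : ℕ, 1 ≤ j → j + 1 ≤ m → y m j < y m (j + 1))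
    (hxy : ∀ m j : ℕ, 1 ≤ j → j ≤ m → x (m + 1) j < y m j ∧ y m j < x (m + 1) (j + 1))
    (n : ℕ) (hn : 2 ≤ n)
    (v w : Fin n → ℝ)
    (hv : ∀ i : Fin n, (i : ℕ) + 1 ≤ n - 1 → v i = y (n - 1) ((i : ℕ) + 1))
    (hv' : ∀ i : Fin n, (i : ℕ) + 1 = n → v i = b 0)
    (hw : ∀ i : Fin n, w i = x n ((i : ℕ) + 1))
    (σ τ : Equiv.Perm (Fin n))
    (hσ : Antitone (fun i => v (σ i))) (hτ : Antitone (fun i => w (τ i))) :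
    (∀ m : ℕ, 1 ≤ m → m ≤ n - 1 →
      ∑ i ∈ Finset.univ.filter (fun i : Fin n => (i : ℕ) < m), v (σ i) ≤
        ∑ i ∈ Finset.univ.filter (fun i : Fin n => (i : ℕ) < m), w (τ i)) ∧
    ∑ i : Fin n, v i = ∑ i : Fin n, w i :=
  stmt_11_general p hdeg a b hapos hrec0 hrec x hxroot hxmono q hq0 hqrec0 hqrec y hyroot hymono hxy
    n v w hv hv' hw σ τ hτ
end

section
/- Fix n ≥ 1 and 1 ≤ j ≤ n. Then the Christoffel number λ_{j,n} satisfies λ_{j,n} = p^{(1)}_{n-1}(x_{j,n})/(a_1 · p_n'(x_{j,n})). -/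
/-!
Orthonormality with respect to a probability measure forces `p 0 = 1`. At a zero `x₀` of `p n`
the confluent Christoffel–Darboux formula gives `∑_{i<n} p_i(x₀)² = a_n p_n'(x₀) p_{n-1}(x₀)`,
and the Casoratian of `p` and the associated polynomials, which the recurrence keeps constant,
gives `a_n p_{n-1}(x₀) p^{(1)}_{n-1}(x₀) = a_1`. Dividing the two identities gives the formula.
-/

open MeasureTheory Polynomial Finset

lemma Polynomial.eq_one_of_degree_eq_zero_of_integral_mul_self {μ : Measure ℝ}
    [IsProbabilityMeasure μ] {P : ℝ[X]} (hdeg : P.degree = 0) (hlead : 0 < P.leadingCoeff)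
    (hnorm : ∫ t, P.eval t * P.eval t ∂μ = 1) : P = 1 := by
  have hP : P = C P.leadingCoeff := by
    rw [leadingCoeff, natDegree_eq_of_degree_eq_some hdeg]
    exact eq_C_of_degree_le_zero hdeg.le
  rw [hP] at hnorm
  simp only [eval_C, integral_const, probReal_univ, one_smul] at hnorm
  have hc : P.leadingCoeff = 1 := by nlinarith
  rw [hP, hc, C_1]

/-- Applied to the associated polynomials, this gives the solution of the recurrence of `p` with
initial values `0, 1`. -/
def prependZero {R : Type*} [Zero R] (v : ℕ → R) : ℕ → R
  | 0 => 0
  | m + 1 => v m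

lemma casoratian_eq_of_recurrence {R : Type*} [CommRing R] (x : R) (c d u v : ℕ → R)
    (hu : ∀ m, x * u (m + 1) = c (m + 2) * u (m + 2) + d (m + 1) * u (m + 1) + c (m + 1) * u m)
    (hv : ∀ m, x * v (m + 1) = c (m + 2) * v (m + 2) + d (m + 1) * v (m + 1) + c (m + 1) * v m)
    (m : ℕ) :
    c (m + 1) * (u (m + 1) * v m - u m * v (m + 1)) = c 1 * (u 1 * v 0 - u 0 * v 1) := by
  induction m with
  | zero => rfl
  | succ k ih => linear_combination u (k + 1) * hv k - v (k + 1) * hu k + ih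

lemma Polynomial.christoffelDarboux_confluent {R : Type*} [CommRing R] (p : ℕ → R[X])
    (a b : ℕ → R) (hp0 : derivative (p 0) = 0)
    (hrec0 : X * p 0 = C (a 1) * p 1 + C (b 0) * p 0)
    (hrec : ∀ m, X * p (m + 1) = C (a (m + 2)) * p (m + 2) + C (b (m + 1)) * p (m + 1) +
      C (a (m + 1)) * p m) (m : ℕ) :
    C (a (m + 1)) * (derivative (p (m + 1)) * p m - derivative (p m) * p (m + 1)) =
      ∑ i ∈ range (m + 1), p i ^ 2 := by
  induction m with
  | zero =>
    have hd := congrArg derivative hrec0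
    simp only [derivative_mul, derivative_add, derivative_X, derivative_C, hp0] at hd
    rw [sum_range_one, hp0]
    linear_combination -(p 0) * hd
  | succ k ih =>
    have hd := congrArg derivative (hrec k)
    simp only [derivative_mul, derivative_X, derivative_C, derivative_add] at hd
    rw [sum_range_succ]
    linear_combination derivative (p (k + 1)) * hrec k - p (k + 1) * hd + ih

theorem stmt_15_general
    (μ : Measure ℝ) [IsProbabilityMeasure μ]
    (p : ℕ → Polynomial ℝ)
    (hdeg : ∀ m : ℕ, (p m).degree = m)
    (hlead : ∀ m : ℕ, 0 < (p m).leadingCoeff)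
    (horth : ∀ m l : ℕ, ∫ t, (p m).eval t * (p l).eval t ∂μ = if m = l then 1 else 0)
    (a b : ℕ → ℝ)
    (hapos : ∀ m : ℕ, 1 ≤ m → 0 < a m)
    (hrec0 : Polynomial.X * p 0 = Polynomial.C (a 1) * p 1 + Polynomial.C (b 0) * p 0)
    (hrec : ∀ m : ℕ, Polynomial.X * p (m + 1) =
      Polynomial.C (a (m + 2)) * p (m + 2) + Polynomial.C (b (m + 1)) * p (m + 1) +
        Polynomial.C (a (m + 1)) * p m)
    (x : ℕ → ℕ → ℝ)
    (hxroot : ∀ m j : ℕ, 1 ≤ j → j ≤ m → (p m).eval (x m j) = 0)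
    (lam : ℕ → ℕ → ℝ)
    (hlam : ∀ m j : ℕ, lam m j = (∑ i ∈ Finset.range m, ((p i).eval (x m j)) ^ 2)⁻¹)
    (q : ℕ → Polynomial ℝ)
    (hq0 : q 0 = 1)
    (hqrec0 : Polynomial.X * q 0 = Polynomial.C (a 2) * q 1 + Polynomial.C (b 1) * q 0)
    (hqrec : ∀ m : ℕ, Polynomial.X * q (m + 1) =
      Polynomial.C (a (m + 3)) * q (m + 2) + Polynomial.C (b (m + 2)) * q (m + 1) +
        Polynomial.C (a (m + 2)) * q m)
    (n : ℕ) (hn : 1 ≤ n) (j : ℕ) (hj1 : 1 ≤ j) (hj2 : j ≤ n) :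
    lam n j = (q (n - 1)).eval (x n j) / (a 1 * (Polynomial.derivative (p n)).eval (x n j)) := by
  have hp0 : p 0 = 1 := eq_one_of_degree_eq_zero_of_integral_mul_self (μ := μ) (hdeg 0)
    (hlead 0) (by simpa using horth 0 0)
  obtain ⟨k, rfl⟩ : ∃ k, n = k + 1 := ⟨n - 1, by omega⟩
  set x₀ := x (k + 1) j
  have hroot : (p (k + 1)).eval x₀ = 0 := hxroot (k + 1) j hj1 hj2
  have hCD : a (k + 1) * ((derivative (p (k + 1))).eval x₀ * (p k).eval x₀) =
      ∑ i ∈ range (k + 1), (p i).eval x₀ ^ 2 := by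
    simpa [hroot, eval_finsetSum] using congrArg (eval x₀)
      (christoffelDarboux_confluent p a b (by rw [hp0, derivative_one]) hrec0 hrec k)
  have hW : a (k + 1) * ((p k).eval x₀ * (q k).eval x₀) = a 1 := by
    simpa [prependZero, hp0, hq0, hroot] using congrArg (eval x₀)
      (casoratian_eq_of_recurrence X (fun m => C (a m)) (fun m => C (b m)) p (prependZero q) hrec
        (by rintro (_ | m) <;> simp [prependZero, hqrec0, hqrec]) k)
  have hq : (q k).eval x₀ ≠ 0 := by
    intro hq
    rw [hq, mul_zero, mul_zero] at hW
    exact (hapos 1 le_rfl).ne hW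
  rw [hlam, Nat.add_sub_cancel, ← hCD, ← hW]
  rw [show a (k + 1) * ((p k).eval x₀ * (q k).eval x₀) * (derivative (p (k + 1))).eval x₀ =
      (q k).eval x₀ * (a (k + 1) * ((derivative (p (k + 1))).eval x₀ * (p k).eval x₀)) by ring,
    div_mul_cancel_left₀ hq]

theorem stmt_15
    (μ : Measure ℝ) [IsProbabilityMeasure μ]
    (lo hi : ℝ)
    (hsupp : μ (Set.Icc lo hi)ᶜ = 0)
    (hinf : ∀ s : Finset ℝ, μ (↑s : Set ℝ)ᶜ ≠ 0)
    (p : ℕ → Polynomial ℝ)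
    (hdeg : ∀ m : ℕ, (p m).degree = m)
    (hlead : ∀ m : ℕ, 0 < (p m).leadingCoeff)
    (horth : ∀ m l : ℕ, ∫ t, (p m).eval t * (p l).eval t ∂μ = if m = l then 1 else 0)
    (a b : ℕ → ℝ)
    (hapos : ∀ m : ℕ, 1 ≤ m → 0 < a m)
    (hrec0 : Polynomial.X * p 0 = Polynomial.C (a 1) * p 1 + Polynomial.C (b 0) * p 0)
    (hrec : ∀ m : ℕ, Polynomial.X * p (m + 1) =
      Polynomial.C (a (m + 2)) * p (m + 2) + Polynomial.C (b (m + 1)) * p (m + 1) +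
        Polynomial.C (a (m + 1)) * p m)
    (x : ℕ → ℕ → ℝ)
    (hxroot : ∀ m j : ℕ, 1 ≤ j → j ≤ m → (p m).eval (x m j) = 0)
    (hxmono : ∀ m j : ℕ, 1 ≤ j → j + 1 ≤ m → x m j < x m (j + 1))
    (lam : ℕ → ℕ → ℝ)
    (hlam : ∀ m j : ℕ, lam m j = (∑ i ∈ Finset.range m, ((p i).eval (x m j)) ^ 2)⁻¹)
    (q : ℕ → Polynomial ℝ)
    (hq0 : q 0 = 1)
    (hqrec0 : Polynomial.X * q 0 = Polynomial.C (a 2) * q 1 + Polynomial.C (b 1) * q 0)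
    (hqrec : ∀ m : ℕ, Polynomial.X * q (m + 1) =
      Polynomial.C (a (m + 3)) * q (m + 2) + Polynomial.C (b (m + 2)) * q (m + 1) +
        Polynomial.C (a (m + 2)) * q m)
    (n : ℕ) (hn : 1 ≤ n) (j : ℕ) (hj1 : 1 ≤ j) (hj2 : j ≤ n) :
    lam n j = (q (n - 1)).eval (x n j) / (a 1 * (Polynomial.derivative (p n)).eval (x n j)) :=
  stmt_15_general μ p hdeg hlead horth a b hapos hrec0 hrec x hxroot lam hlam q hq0 hqrec0 hqrec n
    hn j hj1 hj2
end
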